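/- Let γ and γ⊥ be orthonormal vectors in ℂ², let θ ∈ ℝ, and set φ = (γ + e^{iθ}γ⊥)/√2 and ψ = (γ + e^{i(θ+π/2)}γ⊥)/√2 (mutually unbiased pre- and post-selection). Let φ⊥ be a unit vector orthogonal to φ, let p ∈ [0,1), and set ρ := (1−p)|φ⟩⟨φ| + p|φ⊥⟩⟨φ⊥|. For ε ∈ {+1,−1}, let H^ε := ((1−ε√2)/2)·I + (ε√2/2)·(|φ⟩⟨φ| + |ψ⟩⟨ψ|). Then |Im(W_{φ,ψ}(|γ⟩⟨γ|)) − Im(W_{ρ,ψ}(|γ⟩⟨γ|))| ≥ |Re(W_{φ,ψ}(H^ε)) − Re(W_{ρ,ψ}(H^ε))|, with equality if and only if p = 0. -/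

import Mathlib

noncomputable section

/-- The rank-one projector `|v⟩⟨v|` with entries `v i * conj (v j)`. -/
def proj (v : EuclideanSpace ℂ (Fin 2)) : Matrix (Fin 2) (Fin 2) ℂ :=
  Matrix.of fun i j => v i * star (v j)

/-- Matrix-vector multiplication, valued in `EuclideanSpace ℂ (Fin 2)`. -/
def mulVecE (M : Matrix (Fin 2) (Fin 2) ℂ) (v : EuclideanSpace ℂ (Fin 2)) :
    EuclideanSpace ℂ (Fin 2) :=
  (WithLp.equiv 2 (Fin 2 → ℂ)).symm (M.mulVec ((WithLp.equiv 2 (Fin 2 → ℂ)) v))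

/-- The weak value `W_{φ,ψ}(M) = ⟨ψ, Mφ⟩ / ⟨ψ, φ⟩`. -/
def weak (φ ψ : EuclideanSpace ℂ (Fin 2)) (M : Matrix (Fin 2) (Fin 2) ℂ) : ℂ :=
  (inner ℂ ψ (mulVecE M φ) : ℂ) / (inner ℂ ψ φ : ℂ)

/-- The generalized weak value `W_{ρ,ψ}(M) = Tr(|ψ⟩⟨ψ| M ρ) / Tr(|ψ⟩⟨ψ| ρ)`. -/
def gweak (ρ : Matrix (Fin 2) (Fin 2) ℂ) (ψ : EuclideanSpace ℂ (Fin 2))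
    (M : Matrix (Fin 2) (Fin 2) ℂ) : ℂ :=
  (proj ψ * M * ρ).trace / (proj ψ * ρ).trace

/-!
In `ℂ²`, `|φ⟩⟨φ| + |φ⊥⟩⟨φ⊥| = 1`, so `ρ = p • 1 + (1 - 2p)|φ⟩⟨φ|`. Because `φ` and `ψ` are mutually
unbiased (`|⟨ψ, φ⟩|² = 1/2`), `Tr(|ψ⟩⟨ψ|ρ) = 1/2` for every `p`, and the generalized weak value
interpolates between the weak value and the expectation value in `ψ`:
`W_{ρ,ψ}(M) = (1 - 2p) W_{φ,ψ}(M) + 2p ⟨ψ, Mψ⟩`.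
For `M = |γ⟩⟨γ|` we get `W = (1 + i)/2` and `⟨ψ, Mψ⟩ = 1/2`, so the difference is `p i`;
for `M = H^ε` it is the real number `p ε √2 / 2`. The claim follows from `√2 / 2 < 1`.
-/

open scoped InnerProductSpace ComplexConjugate

lemma mulVecE_eq_toLpLin (M : Matrix (Fin 2) (Fin 2) ℂ) (v : EuclideanSpace ℂ (Fin 2)) :
    mulVecE M v = Matrix.toLpLin 2 2 M v := rfl

lemma mulVecE_one (v : EuclideanSpace ℂ (Fin 2)) : mulVecE 1 v = v := by
  simp [mulVecE_eq_toLpLin]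

lemma mulVecE_add (M N : Matrix (Fin 2) (Fin 2) ℂ) (v : EuclideanSpace ℂ (Fin 2)) :
    mulVecE (M + N) v = mulVecE M v + mulVecE N v := by
  simp [mulVecE_eq_toLpLin]

lemma mulVecE_smul (c : ℂ) (M : Matrix (Fin 2) (Fin 2) ℂ) (v : EuclideanSpace ℂ (Fin 2)) :
    mulVecE (c • M) v = c • mulVecE M v := by
  simp [mulVecE_eq_toLpLin]

lemma inner_fin_two (x y : EuclideanSpace ℂ (Fin 2)) :
    ⟪x, y⟫_ℂ = conj (x 0) * y 0 + conj (x 1) * y 1 := by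
  simp [PiLp.inner_apply, Fin.sum_univ_two, mul_comm]

lemma mulVecE_proj (u v : EuclideanSpace ℂ (Fin 2)) : mulVecE (proj u) v = ⟪u, v⟫_ℂ • u := by
  ext i
  fin_cases i <;> simp [proj, mulVecE, inner_fin_two] <;> ring

lemma trace_proj_mul (x : EuclideanSpace ℂ (Fin 2)) (M : Matrix (Fin 2) (Fin 2) ℂ) :
    (proj x * M).trace = ⟪x, mulVecE M x⟫_ℂ := by
  simp [proj, mulVecE, Matrix.trace, Matrix.mul_apply, Fin.sum_univ_two, inner_fin_two]
  ring

lemma trace_proj_mul_mul_proj (x v : EuclideanSpace ℂ (Fin 2)) (M : Matrix (Fin 2) (Fin 2) ℂ) :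
    (proj x * M * proj v).trace = ⟪v, x⟫_ℂ * ⟪x, mulVecE M v⟫_ℂ := by
  simp [proj, mulVecE, Matrix.trace, Matrix.mul_apply, Fin.sum_univ_two, inner_fin_two]
  ring

lemma proj_add_proj_eq_one {u v : EuclideanSpace ℂ (Fin 2)} (hu : ‖u‖ = 1) (hv : ‖v‖ = 1)
    (huv : ⟪u, v⟫_ℂ = 0) : proj u + proj v = 1 := by
  have hon : Orthonormal ℂ ![u, v] := by
    rw [orthonormal_iff_ite]
    intro i j
    fin_cases i <;> fin_cases j <;>
      simp [inner_self_eq_norm_sq_to_K, hu, hv, huv, inner_eq_zero_symm.mp huv]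
  let b := (basisOfOrthonormalOfCardEqFinrank hon (by simp)).toOrthonormalBasis
    (by rwa [coe_basisOfOrthonormalOfCardEqFinrank])
  have hb : ⇑b = ![u, v] := by simp [b, coe_basisOfOrthonormalOfCardEqFinrank]
  apply (Matrix.toLpLin 2 2).injective
  ext1 x
  have := b.sum_repr' x
  simp only [Fin.sum_univ_two, hb] at this
  simpa [← mulVecE_eq_toLpLin, mulVecE_add, mulVecE_proj] using this

/-- Equals `(1 - p)|φ⟩⟨φ| + p|φ⊥⟩⟨φ⊥|` for any unit `φ⊥ ⊥ φ`
(`smul_proj_add_smul_proj_eq_noisyState`). -/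
def noisyState (p : ℂ) (φ : EuclideanSpace ℂ (Fin 2)) : Matrix (Fin 2) (Fin 2) ℂ :=
  p • 1 + (1 - 2 * p) • proj φ

lemma smul_proj_add_smul_proj_eq_noisyState {u v : EuclideanSpace ℂ (Fin 2)} (hu : ‖u‖ = 1)
    (hv : ‖v‖ = 1) (huv : ⟪u, v⟫_ℂ = 0) (p : ℂ) :
    (1 - p) • proj u + p • proj v = noisyState p u := by
  rw [noisyState, ← proj_add_proj_eq_one hu hv huv]
  module

lemma trace_proj_mul_mul_noisyState (ψ φ : EuclideanSpace ℂ (Fin 2))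
    (M : Matrix (Fin 2) (Fin 2) ℂ) (p : ℂ) :
    (proj ψ * M * noisyState p φ).trace
      = p * ⟪ψ, mulVecE M ψ⟫_ℂ + (1 - 2 * p) * (⟪φ, ψ⟫_ℂ * ⟪ψ, mulVecE M φ⟫_ℂ) := by
  rw [noisyState, mul_add, mul_smul_comm, mul_smul_comm, mul_one, Matrix.trace_add,
    Matrix.trace_smul, Matrix.trace_smul, trace_proj_mul, trace_proj_mul_mul_proj, smul_eq_mul,
    smul_eq_mul]

lemma weak_sub_gweak_noisyState {φ ψ : EuclideanSpace ℂ (Fin 2)} (hψ : ⟪ψ, ψ⟫_ℂ = 1)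
    (hφψ : ⟪φ, ψ⟫_ℂ * ⟪ψ, φ⟫_ℂ = 1 / 2) (p : ℂ) (M : Matrix (Fin 2) (Fin 2) ℂ) :
    weak φ ψ M - gweak (noisyState p φ) ψ M = 2 * p * (weak φ ψ M - ⟪ψ, mulVecE M ψ⟫_ℂ) := by
  have hψφ : ⟪ψ, φ⟫_ℂ ≠ 0 := by rintro h; simp [h] at hφψ
  have hden : (proj ψ * noisyState p φ).trace = 1 / 2 := by
    rw [← Matrix.mul_one (proj ψ), trace_proj_mul_mul_noisyState]
    simp only [mulVecE_one, hψ, hφψ]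
    ring
  rw [gweak, hden, trace_proj_mul_mul_noisyState, weak]
  field_simp
  linear_combination (4 * p - 2) * ⟪ψ, mulVecE M φ⟫_ℂ * hφψ

lemma ofReal_sqrt_two_inv_mul_self : (Real.sqrt 2 : ℂ)⁻¹ * (Real.sqrt 2 : ℂ)⁻¹ = 1 / 2 := by
  rw [← mul_inv, ← Complex.ofReal_mul, Real.mul_self_sqrt zero_le_two]; norm_num

section Balanced

variable {γ γ' : EuclideanSpace ℂ (Fin 2)}

lemma inner_add_smul_add_smul (hγ : ‖γ‖ = 1) (hγ' : ‖γ'‖ = 1) (horth : ⟪γ, γ'⟫_ℂ = 0)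
    (a b : ℂ) : ⟪γ + a • γ', γ + b • γ'⟫_ℂ = 1 + conj a * b := by
  simp [inner_self_eq_norm_sq_to_K, hγ, hγ', horth, inner_eq_zero_symm.mp horth, mul_comm]

lemma inner_add_smul_right (hγ : ‖γ‖ = 1) (horth : ⟪γ, γ'⟫_ℂ = 0) (a : ℂ) :
    ⟪γ, γ + a • γ'⟫_ℂ = 1 := by
  simp [inner_self_eq_norm_sq_to_K, hγ, horth]

lemma norm_inv_sqrt_two_smul_add_smul (hγ : ‖γ‖ = 1) (hγ' : ‖γ'‖ = 1)
    (horth : ⟪γ, γ'⟫_ℂ = 0) {a : ℂ} (ha : ‖a‖ = 1) :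
    ‖(Real.sqrt 2 : ℂ)⁻¹ • (γ + a • γ')‖ = 1 := by
  have hsq : ‖γ + a • γ'‖ * ‖γ + a • γ'‖ = 2 := by
    have hperp : ⟪γ, a • γ'⟫_ℂ = 0 := by rw [inner_smul_right, horth, mul_zero]
    rw [norm_add_sq_eq_norm_sq_add_norm_sq_of_inner_eq_zero γ (a • γ') hperp, norm_smul, ha, hγ,
      hγ']
    norm_num
  rw [norm_smul, norm_inv, Complex.norm_real, Real.norm_of_nonneg (Real.sqrt_nonneg 2),
    ← Real.sqrt_mul_self (norm_nonneg _), hsq, inv_mul_cancel₀ (by positivity)]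

lemma inner_inv_sqrt_two_smul_add_smul (hγ : ‖γ‖ = 1) (hγ' : ‖γ'‖ = 1)
    (horth : ⟪γ, γ'⟫_ℂ = 0) (a b : ℂ) :
    ⟪(Real.sqrt 2 : ℂ)⁻¹ • (γ + a • γ'), (Real.sqrt 2 : ℂ)⁻¹ • (γ + b • γ')⟫_ℂ
      = (1 + conj a * b) / 2 := by
  rw [inner_smul_left, inner_smul_right, map_inv₀, Complex.conj_ofReal, ← mul_assoc,
    ofReal_sqrt_two_inv_mul_self, inner_add_smul_add_smul hγ hγ' horth]
  ring

end Balanced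

section Unbiased

variable {φ ψ : EuclideanSpace ℂ (Fin 2)}

lemma inner_eq_one_add_I_div_two (hψφ : ⟪ψ, φ⟫_ℂ = (1 - Complex.I) / 2) :
    ⟪φ, ψ⟫_ℂ = (1 + Complex.I) / 2 := by
  rw [← inner_conj_symm, hψφ]
  simp [map_div₀, sub_eq_add_neg, map_ofNat]

lemma inner_mul_inner_eq_half (hψφ : ⟪ψ, φ⟫_ℂ = (1 - Complex.I) / 2) :
    ⟪φ, ψ⟫_ℂ * ⟪ψ, φ⟫_ℂ = 1 / 2 := by
  rw [inner_eq_one_add_I_div_two hψφ, hψφ]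
  linear_combination -Complex.I_sq / 4

lemma one_sub_I_ne_zero : (1 : ℂ) - Complex.I ≠ 0 := by
  simp [sub_eq_zero, Complex.ext_iff]

lemma weak_sub_gweak_noisyState_proj {γ : EuclideanSpace ℂ (Fin 2)} (hψ : ⟪ψ, ψ⟫_ℂ = 1)
    (hψφ : ⟪ψ, φ⟫_ℂ = (1 - Complex.I) / 2) (hγφ : ⟪γ, φ⟫_ℂ = (Real.sqrt 2 : ℂ)⁻¹)
    (hγψ : ⟪γ, ψ⟫_ℂ = (Real.sqrt 2 : ℂ)⁻¹) (p : ℂ) :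
    weak φ ψ (proj γ) - gweak (noisyState p φ) ψ (proj γ) = p * Complex.I := by
  have hψγ : ⟪ψ, γ⟫_ℂ = (Real.sqrt 2 : ℂ)⁻¹ := by
    rw [← inner_conj_symm, hγψ, map_inv₀, Complex.conj_ofReal]
  have := one_sub_I_ne_zero
  rw [weak_sub_gweak_noisyState hψ (inner_mul_inner_eq_half hψφ), weak, mulVecE_proj,
    mulVecE_proj, inner_smul_right, inner_smul_right, hγφ, hγψ, hψγ, hψφ,
    ofReal_sqrt_two_inv_mul_self]
  field_simp
  linear_combination p * Complex.I_sq

lemma weak_sub_gweak_noisyState_smul_one_add_smul_proj_add_proj (hφ : ⟪φ, φ⟫_ℂ = 1)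
    (hψ : ⟪ψ, ψ⟫_ℂ = 1) (hψφ : ⟪ψ, φ⟫_ℂ = (1 - Complex.I) / 2) (p a b : ℂ) :
    weak φ ψ (a • 1 + b • (proj φ + proj ψ))
      - gweak (noisyState p φ) ψ (a • 1 + b • (proj φ + proj ψ)) = p * b := by
  have := one_sub_I_ne_zero
  rw [weak_sub_gweak_noisyState hψ (inner_mul_inner_eq_half hψφ), weak]
  simp only [mulVecE_add, mulVecE_smul, mulVecE_one, mulVecE_proj, inner_add_right,
    inner_smul_right, hφ, hψ, hψφ, inner_eq_one_add_I_div_two hψφ]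
  field_simp
  linear_combination p * b * Complex.I_sq

end Unbiased

lemma abs_mul_le_abs_and_eq_iff {x : ℝ} (hx : |x| < 1) (p : ℝ) :
    |p * x| ≤ |p| ∧ (|p| = |p * x| ↔ p = 0) := by
  rw [abs_mul]
  refine ⟨mul_le_of_le_one_right (abs_nonneg p) hx.le, fun h => ?_, fun h => by simp [h]⟩
  by_contra hp
  exact (mul_lt_of_lt_one_right (abs_pos.mpr hp) hx).ne h.symm

lemma abs_mul_sqrt_two_div_two_lt_one {ε : ℝ} (hε : |ε| = 1) : |ε * Real.sqrt 2 / 2| < 1 := by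
  rw [abs_div, abs_mul, hε, one_mul, abs_of_pos (by positivity), abs_two, div_lt_one two_pos]
  exact (Real.sqrt_lt' two_pos).mpr (by norm_num)

theorem stmt15_general (γ γperp : EuclideanSpace ℂ (Fin 2))
    (hγ : ‖γ‖ = 1) (hγp : ‖γperp‖ = 1) (horth : (inner ℂ γ γperp : ℂ) = 0)
    (θ : ℝ)
    (φ ψ : EuclideanSpace ℂ (Fin 2))
    (hφ : φ = (Real.sqrt 2 : ℂ)⁻¹ • (γ + Complex.exp (θ * Complex.I) • γperp))
    (hψ : ψ = (Real.sqrt 2 : ℂ)⁻¹ •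
        (γ + Complex.exp ((θ + Real.pi / 2) * Complex.I) • γperp))
    (φperp : EuclideanSpace ℂ (Fin 2))
    (hφperp : ‖φperp‖ = 1) (horth' : (inner ℂ φ φperp : ℂ) = 0)
    (p : ℝ)
    (ρ : Matrix (Fin 2) (Fin 2) ℂ)
    (hρ : ρ = ((1 - p : ℝ) : ℂ) • proj φ + ((p : ℝ) : ℂ) • proj φperp)
    (ε : ℝ) (hε : ε = 1 ∨ ε = -1)
    (H : Matrix (Fin 2) (Fin 2) ℂ)
    (hH : H = (((1 - ε * Real.sqrt 2) / 2 : ℝ) : ℂ) • (1 : Matrix (Fin 2) (Fin 2) ℂ)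
        + ((ε * Real.sqrt 2 / 2 : ℝ) : ℂ) • (proj φ + proj ψ)) :
    |(weak φ ψ (proj γ)).im - (gweak ρ ψ (proj γ)).im| ≥
        |(weak φ ψ H).re - (gweak ρ ψ H).re| ∧
      (|(weak φ ψ (proj γ)).im - (gweak ρ ψ (proj γ)).im| =
          |(weak φ ψ H).re - (gweak ρ ψ H).re| ↔ p = 0) := by
  rw [add_mul, Complex.exp_add, Complex.exp_pi_div_two_mul_I, mul_comm] at hψ
  set e := Complex.exp (θ * Complex.I)
  have he : ‖e‖ = 1 := Complex.norm_exp_ofReal_mul_I θ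
  have hφn : ‖φ‖ = 1 := hφ ▸ norm_inv_sqrt_two_smul_add_smul hγ hγp horth he
  have hφφ : ⟪φ, φ⟫_ℂ = 1 := inner_self_eq_one_of_norm_eq_one hφn
  have hψψ : ⟪ψ, ψ⟫_ℂ = 1 := inner_self_eq_one_of_norm_eq_one
    (hψ ▸ norm_inv_sqrt_two_smul_add_smul hγ hγp horth (by simp [he]))
  have hψφ : ⟪ψ, φ⟫_ℂ = (1 - Complex.I) / 2 := by
    rw [hψ, hφ, inner_inv_sqrt_two_smul_add_smul hγ hγp horth, map_mul, mul_assoc,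
      Complex.conj_mul', he, Complex.conj_I]
    push_cast
    ring
  have hγφ : ⟪γ, φ⟫_ℂ = (Real.sqrt 2 : ℂ)⁻¹ := by
    rw [hφ, inner_smul_right, inner_add_smul_right hγ horth, mul_one]
  have hγψ : ⟪γ, ψ⟫_ℂ = (Real.sqrt 2 : ℂ)⁻¹ := by
    rw [hψ, inner_smul_right, inner_add_smul_right hγ horth, mul_one]
  have hρ' : ρ = noisyState p φ := by
    rw [hρ, ← smul_proj_add_smul_proj_eq_noisyState hφn hφperp horth']
    push_cast; rfl
  have hε' : |ε| = 1 := by rcases hε with rfl | rfl <;> simp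
  rw [ge_iff_le, ← Complex.sub_im, ← Complex.sub_re, hρ', hH,
    weak_sub_gweak_noisyState_proj hψψ hψφ hγφ hγψ,
    weak_sub_gweak_noisyState_smul_one_add_smul_proj_add_proj hφφ hψψ hψφ]
  simpa using abs_mul_le_abs_and_eq_iff (abs_mul_sqrt_two_div_two_lt_one hε') p

/-- for mutually unbiased pre- and post-selection and depolarizing noise of
strength `p ∈ [0,1)`, the attenuation of the imaginary component of the weak value of
`|γ⟩⟨γ|` is at least as large as the attenuation of the real component of the weak value
of `H^ε`, with equality iff `p = 0`. -/
theorem stmt15 (γ γperp : EuclideanSpace ℂ (Fin 2))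
    (hγ : ‖γ‖ = 1) (hγp : ‖γperp‖ = 1) (horth : (inner ℂ γ γperp : ℂ) = 0)
    (θ : ℝ)
    (φ ψ : EuclideanSpace ℂ (Fin 2))
    (hφ : φ = (Real.sqrt 2 : ℂ)⁻¹ • (γ + Complex.exp (θ * Complex.I) • γperp))
    (hψ : ψ = (Real.sqrt 2 : ℂ)⁻¹ •
        (γ + Complex.exp ((θ + Real.pi / 2) * Complex.I) • γperp))
    (φperp : EuclideanSpace ℂ (Fin 2))
    (hφperp : ‖φperp‖ = 1) (horth' : (inner ℂ φ φperp : ℂ) = 0)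
    (p : ℝ) (hp : p ∈ Set.Ico (0 : ℝ) 1)
    (ρ : Matrix (Fin 2) (Fin 2) ℂ)
    (hρ : ρ = ((1 - p : ℝ) : ℂ) • proj φ + ((p : ℝ) : ℂ) • proj φperp)
    (ε : ℝ) (hε : ε = 1 ∨ ε = -1)
    (H : Matrix (Fin 2) (Fin 2) ℂ)
    (hH : H = (((1 - ε * Real.sqrt 2) / 2 : ℝ) : ℂ) • (1 : Matrix (Fin 2) (Fin 2) ℂ)
        + ((ε * Real.sqrt 2 / 2 : ℝ) : ℂ) • (proj φ + proj ψ)) :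
    |(weak φ ψ (proj γ)).im - (gweak ρ ψ (proj γ)).im| ≥
        |(weak φ ψ H).re - (gweak ρ ψ H).re| ∧
      (|(weak φ ψ (proj γ)).im - (gweak ρ ψ (proj γ)).im| =
          |(weak φ ψ H).re - (gweak ρ ψ H).re| ↔ p = 0) :=
  stmt15_general γ γperp hγ hγp horth θ φ ψ hφ hψ φperp hφperp horth' p ρ hρ ε hε H hH
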